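/- arXiv:1109.5565 — 2 statements merged into one kernel-verified Lean document; each statement's English description precedes it below -/
import Mathlib

section
/- Let n ≥ 1, let Ω ⊂ ℝⁿ be a bounded open set with diameter ℓ, let x₀ ∈ Ω, let 1 < p < ∞ with conjugate exponent p′ = p/(p−1), let ω : (0,∞) → (0,∞) be measurable, and let γ ∈ ℝ. If ∫_0^ℓ ω(r) r^{γ−1} dr < ∞, then there exists a constant C > 0 such that for every measurable f : Ω → ℝ, ∫_Ω |y−x₀|^γ |f(y)| dy ≤ C ‖f‖_{∁M^{p,ω}_{x₀}(Ω)}; that is, ∁M^{p,ω}_{x₀}(Ω) embeds into the weighted space L^1(Ω, |y−x₀|^γ). -/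
open MeasureTheory Metric Set ENNReal Filter Topology

/- For `y ≠ x₀`, `|y - x₀|^γ ≤ C ∫_{|y-x₀|/2}^{|y-x₀|} r^{γ-1} dr`. Swapping the
integrals (Tonelli), the inner integral over `y` runs over `Ω ∩ {r < |y - x₀| < 2r}`, a subset of
`B(x₀, 2r) ∖ B(x₀, r)`, so Hölder bounds it by
`|B(x₀, 2r)|^{1/p′} ‖f‖_{L^p(Ω ∖ B(x₀, r))} ≲ ω(r) ‖f‖_{∁M^{p,ω}_{x₀}(Ω)}`; it vanishes unless
`0 < r < ℓ`, which leaves `∫_0^ℓ ω(r) r^{γ-1} dr` as the constant. -/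

/-- The `L^p` "norm" of `f` over a set `E`, `(∫_E |f|^p)^{1/p}`, valued in `ℝ≥0∞`. -/
noncomputable def lpnorm {n : ℕ} (p : ℝ) (E : Set (EuclideanSpace ℝ (Fin n)))
    (f : EuclideanSpace ℝ (Fin n) → ℝ) : ℝ≥0∞ :=
  (∫⁻ y in E, ENNReal.ofReal |f y| ^ p) ^ (1 / p)

/-- The norm of the local complementary generalized Morrey space `∁M^{p,ω}_{x₀}(Ω)`:
`sup_{r>0} (r^{n/p′}/ω(r)) ‖f‖_{L^p(Ω ∖ B(x₀,r))}` (here `pc` stands for `p′`). -/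
noncomputable def cMnorm {n : ℕ} (p pc : ℝ) (ω : ℝ → ℝ)
    (Ω : Set (EuclideanSpace ℝ (Fin n))) (x₀ : EuclideanSpace ℝ (Fin n))
    (f : EuclideanSpace ℝ (Fin n) → ℝ) : ℝ≥0∞ :=
  ⨆ r ∈ Ioi (0 : ℝ),
    ENNReal.ofReal (r ^ ((n : ℝ) / pc) / ω r) * lpnorm p (Ω \ ball x₀ r) f

lemma two_mul_rpow_sub_one_le {γ t r : ℝ} (ht : 0 < t) (htr : t / 2 ≤ r) (hrt : r ≤ t) :
    2 * t ^ (γ - 1) ≤ max (2 ^ γ) 2 * r ^ (γ - 1) := by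
  rcases le_or_gt 0 (γ - 1) with hγ | hγ
  · calc 2 * t ^ (γ - 1) = 2 ^ γ * (t / 2) ^ (γ - 1) := by
          rw [Real.div_rpow ht.le zero_le_two, Real.rpow_sub_one two_ne_zero]; field_simp
      _ ≤ max (2 ^ γ) 2 * r ^ (γ - 1) := by gcongr; exact le_max_left _ _
  · gcongr ?_ * ?_
    · exact le_max_right _ _
    · exact Real.rpow_le_rpow_of_nonpos (by linarith) hrt hγ.le

lemma ofReal_rpow_le_mul_setLIntegral_Ioo_half (γ : ℝ) {t : ℝ} (ht : 0 < t) :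
    ENNReal.ofReal (t ^ γ) ≤
      ENNReal.ofReal (max (2 ^ γ) 2) * ∫⁻ r in Ioo (t / 2) t, ENNReal.ofReal (r ^ (γ - 1)) := by
  have hmean : ENNReal.ofReal (t ^ γ) =
      ∫⁻ _ in Ioo (t / 2) t, ENNReal.ofReal (2 * t ^ (γ - 1)) := by
    rw [setLIntegral_const, Real.volume_Ioo, ← ENNReal.ofReal_mul (by positivity),
      Real.rpow_sub_one ht.ne']
    congr 1
    field_simp
    ring
  rw [hmean, ← lintegral_const_mul _ (by fun_prop)]
  refine setLIntegral_mono (by fun_prop) fun r hr => ?_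
  rw [← ENNReal.ofReal_mul (by positivity)]
  exact ENNReal.ofReal_le_ofReal (two_mul_rpow_sub_one_le ht hr.1.le hr.2.le)

theorem lintegral_setLIntegral_mul_comm {α β : Type*} [MeasurableSpace α] [MeasurableSpace β]
    {μ : Measure α} {ν : Measure β} [SFinite μ] [SFinite ν] {S : Set (α × β)}
    (hS : MeasurableSet S) {F : α → ℝ≥0∞} {g : β → ℝ≥0∞} (hF : Measurable F)
    (hg : Measurable g) :
    ∫⁻ x, (∫⁻ y in Prod.mk x ⁻¹' S, g y ∂ν) * F x ∂μ =
      ∫⁻ y, g y * ∫⁻ x in (fun x => (x, y)) ⁻¹' S, F x ∂μ ∂ν := by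
  have hG : Measurable (S.indicator fun q : α × β => g q.2 * F q.1) :=
    ((hg.comp measurable_snd).mul (hF.comp measurable_fst)).indicator hS
  calc ∫⁻ x, (∫⁻ y in Prod.mk x ⁻¹' S, g y ∂ν) * F x ∂μ
      = ∫⁻ x, ∫⁻ y, S.indicator (fun q => g q.2 * F q.1) (x, y) ∂ν ∂μ := by
        refine lintegral_congr fun x => ?_
        rw [← lintegral_mul_const _ hg, ← lintegral_indicator (measurable_prodMk_left hS)]
        rfl
    _ = ∫⁻ y, ∫⁻ x, S.indicator (fun q => g q.2 * F q.1) (x, y) ∂μ ∂ν :=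
        lintegral_lintegral_swap hG.aemeasurable
    _ = ∫⁻ y, g y * ∫⁻ x in (fun x => (x, y)) ⁻¹' S, F x ∂μ ∂ν := by
        refine lintegral_congr fun y => ?_
        rw [← lintegral_const_mul _ hF, ← lintegral_indicator (measurable_prodMk_right hS)]
        rfl

lemma ball_diff_closedBall_inter_eq_empty {X : Type*} [PseudoMetricSpace X] {Ω : Set X}
    (hΩ : Bornology.IsBounded Ω) {x₀ : X} (hx₀ : x₀ ∈ Ω) {r : ℝ} (hr : r ∉ Ioo 0 (diam Ω)) :
    (ball x₀ (2 * r) \ closedBall x₀ r) ∩ Ω = ∅ := by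
  refine eq_empty_of_forall_notMem fun y ⟨⟨hy2r, hyr⟩, hy⟩ => hr ⟨?_, ?_⟩
  · linarith [dist_nonneg (x := y) (y := x₀), mem_ball.mp hy2r]
  · have : r < dist y x₀ := not_le.mp hyr
    linarith [dist_le_diam_of_mem hΩ hy hx₀]

theorem lintegral_setLIntegral_Ioo_half_dist_mul {X : Type*} [PseudoMetricSpace X]
    [MeasurableSpace X] [OpensMeasurableSpace X] {μ : Measure X} [SFinite μ] (x₀ : X)
    {g : ℝ → ℝ≥0∞} {F : X → ℝ≥0∞} (hg : Measurable g) (hF : Measurable F) :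
    ∫⁻ y, (∫⁻ r in Ioo (dist y x₀ / 2) (dist y x₀), g r) * F y ∂μ =
      ∫⁻ r, g r * ∫⁻ y in ball x₀ (2 * r) \ closedBall x₀ r, F y ∂μ := by
  set S : Set (X × ℝ) := {q | q.2 ∈ Ioo (dist q.1 x₀ / 2) (dist q.1 x₀)}
  have hS : MeasurableSet S :=
    (measurableSet_lt (by fun_prop) measurable_snd).inter
      (measurableSet_lt measurable_snd (by fun_prop))
  have hsection : ∀ r, (fun y => (y, r)) ⁻¹' S = ball x₀ (2 * r) \ closedBall x₀ r := by
    intro r; ext y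
    simp only [S, mem_preimage, mem_Ioo, mem_ofPred_eq, Set.mem_sdiff, mem_ball, mem_closedBall,
      not_le]
    constructor <;> rintro ⟨h1, h2⟩ <;> constructor <;> linarith
  simp_rw [← hsection]
  exact lintegral_setLIntegral_mul_comm hS hF hg

section Euclidean

variable {n : ℕ}

lemma lpnorm_mono_set {p : ℝ} (hp : 0 ≤ p) {E F : Set (EuclideanSpace ℝ (Fin n))} (hEF : E ⊆ F)
    (f : EuclideanSpace ℝ (Fin n) → ℝ) : lpnorm p E f ≤ lpnorm p F f := by
  unfold lpnorm
  gcongr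

lemma setLIntegral_abs_le_lpnorm {p q : ℝ} (hqp : q.HolderConjugate p)
    (E : Set (EuclideanSpace ℝ (Fin n))) {f : EuclideanSpace ℝ (Fin n) → ℝ} (hf : Measurable f) :
    ∫⁻ y in E, ENNReal.ofReal |f y| ≤ volume E ^ (1 / q) * lpnorm p E f := by
  have hF : Measurable fun y => ENNReal.ofReal |f y| := by fun_prop
  simpa [lpnorm, setLIntegral_one] using ENNReal.lintegral_mul_le_Lp_mul_Lq (volume.restrict E) hqp
    (aemeasurable_const (b := 1)) hF.aemeasurable

lemma volume_ball_rpow (x : EuclideanSpace ℝ (Fin n)) {s : ℝ} (hs : 0 < s) {a : ℝ} (ha : 0 ≤ a) :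
    volume (ball x s) ^ a =
      ENNReal.ofReal (s ^ (n * a)) * volume (ball (0 : EuclideanSpace ℝ (Fin n)) 1) ^ a := by
  rw [Measure.addHaar_ball_of_pos _ _ hs, finrank_euclideanSpace_fin,
    ENNReal.mul_rpow_of_nonneg _ _ ha, ENNReal.ofReal_rpow_of_nonneg (by positivity) ha,
    ← Real.rpow_natCast, ← Real.rpow_mul hs.le]

lemma ofReal_rpow_mul_lpnorm_le_cMnorm {p pc : ℝ} {ω : ℝ → ℝ}
    {Ω : Set (EuclideanSpace ℝ (Fin n))} {x₀ : EuclideanSpace ℝ (Fin n)}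
    {f : EuclideanSpace ℝ (Fin n) → ℝ} {r : ℝ} (hr : 0 < r) (hω : 0 < ω r) :
    ENNReal.ofReal (r ^ ((n : ℝ) / pc)) * lpnorm p (Ω \ ball x₀ r) f ≤
      ENNReal.ofReal (ω r) * cMnorm p pc ω Ω x₀ f := by
  have hterm : ENNReal.ofReal (r ^ ((n : ℝ) / pc) / ω r) * lpnorm p (Ω \ ball x₀ r) f ≤
      cMnorm p pc ω Ω x₀ f :=
    le_iSup₂ (f := fun r (_ : r ∈ Ioi (0 : ℝ)) =>
      ENNReal.ofReal (r ^ ((n : ℝ) / pc) / ω r) * lpnorm p (Ω \ ball x₀ r) f) r hr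
  calc ENNReal.ofReal (r ^ ((n : ℝ) / pc)) * lpnorm p (Ω \ ball x₀ r) f
      = ENNReal.ofReal (ω r) *
          (ENNReal.ofReal (r ^ ((n : ℝ) / pc) / ω r) * lpnorm p (Ω \ ball x₀ r) f) := by
        rw [← mul_assoc, ← ENNReal.ofReal_mul hω.le, mul_div_cancel₀ _ hω.ne']
    _ ≤ ENNReal.ofReal (ω r) * cMnorm p pc ω Ω x₀ f := by gcongr

lemma setLIntegral_annulus_le_cMnorm {p pc : ℝ} (hpc : pc.HolderConjugate p) {ω : ℝ → ℝ}
    {Ω : Set (EuclideanSpace ℝ (Fin n))} {x₀ : EuclideanSpace ℝ (Fin n)}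
    {f : EuclideanSpace ℝ (Fin n) → ℝ} (hf : Measurable f) {r : ℝ} (hr : 0 < r) (hω : 0 < ω r) :
    ∫⁻ y in (ball x₀ (2 * r) \ closedBall x₀ r) ∩ Ω, ENNReal.ofReal |f y| ≤
      ENNReal.ofReal (2 ^ ((n : ℝ) / pc)) *
        volume (ball (0 : EuclideanSpace ℝ (Fin n)) 1) ^ (1 / pc) *
        (ENNReal.ofReal (ω r) * cMnorm p pc ω Ω x₀ f) := by
  have hq : 0 ≤ 1 / pc := one_div_nonneg.mpr hpc.nonneg
  calc ∫⁻ y in (ball x₀ (2 * r) \ closedBall x₀ r) ∩ Ω, ENNReal.ofReal |f y|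
      ≤ volume (ball x₀ (2 * r)) ^ (1 / pc) * lpnorm p (Ω \ ball x₀ r) f := by
        refine (setLIntegral_abs_le_lpnorm hpc _ hf).trans ?_
        gcongr
        · exact inter_subset_left.trans sdiff_subset
        · exact lpnorm_mono_set hpc.symm.nonneg
            (fun y hy => ⟨hy.2, fun h => hy.1.2 (ball_subset_closedBall h)⟩ : _ ⊆ Ω \ ball x₀ r) f
    _ = ENNReal.ofReal (2 ^ ((n : ℝ) / pc)) *
          volume (ball (0 : EuclideanSpace ℝ (Fin n)) 1) ^ (1 / pc) *
          (ENNReal.ofReal (r ^ ((n : ℝ) / pc)) * lpnorm p (Ω \ ball x₀ r) f) := by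
        rw [volume_ball_rpow _ (by positivity) hq, mul_one_div,
          Real.mul_rpow zero_le_two hr.le, ENNReal.ofReal_mul (by positivity)]
        ring
    _ ≤ _ := by gcongr _ * ?_; exact ofReal_rpow_mul_lpnorm_le_cMnorm hr hω

lemma lintegral_rpow_mul_setLIntegral_annulus_le {Ω : Set (EuclideanSpace ℝ (Fin n))}
    (hΩ : Bornology.IsBounded Ω) {x₀ : EuclideanSpace ℝ (Fin n)} (hx₀ : x₀ ∈ Ω) {p pc : ℝ}
    (hpc : pc.HolderConjugate p) {ω : ℝ → ℝ} (hωmeas : Measurable ω)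
    (hωpos : ∀ r > (0 : ℝ), 0 < ω r) (γ : ℝ) {f : EuclideanSpace ℝ (Fin n) → ℝ}
    (hf : Measurable f) :
    ∫⁻ r, ENNReal.ofReal (r ^ (γ - 1)) *
        ∫⁻ y in (ball x₀ (2 * r) \ closedBall x₀ r) ∩ Ω, ENNReal.ofReal |f y| ≤
      ENNReal.ofReal (2 ^ ((n : ℝ) / pc)) *
        volume (ball (0 : EuclideanSpace ℝ (Fin n)) 1) ^ (1 / pc) *
        (∫⁻ r in Ioo 0 (diam Ω), ENNReal.ofReal (ω r * r ^ (γ - 1))) *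
        cMnorm p pc ω Ω x₀ f := by
  set K := ENNReal.ofReal (2 ^ ((n : ℝ) / pc)) *
    volume (ball (0 : EuclideanSpace ℝ (Fin n)) 1) ^ (1 / pc)
  set N := cMnorm p pc ω Ω x₀ f
  rw [mul_right_comm, ← lintegral_const_mul _ (by fun_prop),
    ← lintegral_indicator measurableSet_Ioo]
  refine lintegral_mono fun r => ?_
  by_cases hr : r ∈ Ioo 0 (diam Ω)
  · rw [indicator_of_mem hr, ENNReal.ofReal_mul (hωpos r hr.1).le]
    calc ENNReal.ofReal (r ^ (γ - 1)) *
          ∫⁻ y in (ball x₀ (2 * r) \ closedBall x₀ r) ∩ Ω, ENNReal.ofReal |f y|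
        ≤ ENNReal.ofReal (r ^ (γ - 1)) * (K * (ENNReal.ofReal (ω r) * N)) := by
          gcongr
          exact setLIntegral_annulus_le_cMnorm hpc hf hr.1 (hωpos r hr.1)
      _ = K * N * (ENNReal.ofReal (ω r) * ENNReal.ofReal (r ^ (γ - 1))) := by ring
  · rw [ball_diff_closedBall_inter_eq_empty hΩ hx₀ hr]
    simp

theorem lintegral_rpow_norm_sub_mul_le_cMnorm [NeZero n]
    {Ω : Set (EuclideanSpace ℝ (Fin n))} (hΩ : Bornology.IsBounded Ω)
    {x₀ : EuclideanSpace ℝ (Fin n)} (hx₀ : x₀ ∈ Ω) {p pc : ℝ} (hpc : pc.HolderConjugate p)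
    {ω : ℝ → ℝ} (hωmeas : Measurable ω) (hωpos : ∀ r > (0 : ℝ), 0 < ω r) (γ : ℝ)
    {f : EuclideanSpace ℝ (Fin n) → ℝ} (hf : Measurable f) :
    ∫⁻ y in Ω, ENNReal.ofReal (‖y - x₀‖ ^ γ) * ENNReal.ofReal |f y| ≤
      ENNReal.ofReal (max (2 ^ γ) 2) *
        (ENNReal.ofReal (2 ^ ((n : ℝ) / pc)) *
          volume (ball (0 : EuclideanSpace ℝ (Fin n)) 1) ^ (1 / pc) *
          ∫⁻ r in Ioo 0 (diam Ω), ENNReal.ofReal (ω r * r ^ (γ - 1))) *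
        cMnorm p pc ω Ω x₀ f := by
  simp_rw [← dist_eq_norm]
  calc ∫⁻ y in Ω, ENNReal.ofReal (dist y x₀ ^ γ) * ENNReal.ofReal |f y|
      ≤ ∫⁻ y in Ω, ENNReal.ofReal (max (2 ^ γ) 2) *
          ((∫⁻ r in Ioo (dist y x₀ / 2) (dist y x₀), ENNReal.ofReal (r ^ (γ - 1))) *
            ENNReal.ofReal |f y|) := by
        refine lintegral_mono_ae ((ae_restrict_of_ae (volume.ae_ne x₀)).mono fun y hy => ?_)
        rw [← mul_assoc]
        gcongr
        exact ofReal_rpow_le_mul_setLIntegral_Ioo_half γ (dist_pos.mpr hy)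
    _ = ENNReal.ofReal (max (2 ^ γ) 2) * ∫⁻ r, ENNReal.ofReal (r ^ (γ - 1)) *
          ∫⁻ y in (ball x₀ (2 * r) \ closedBall x₀ r) ∩ Ω, ENNReal.ofReal |f y| := by
        rw [lintegral_const_mul' _ _ ofReal_ne_top,
          lintegral_setLIntegral_Ioo_half_dist_mul x₀ (by fun_prop) (by fun_prop)]
        simp_rw [Measure.restrict_restrict (measurableSet_ball.diff measurableSet_closedBall)]
    _ ≤ _ := by
        rw [mul_assoc]
        gcongr
        exact lintegral_rpow_mul_setLIntegral_annulus_le hΩ hx₀ hpc hωmeas hωpos γ hf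

end Euclidean

theorem statement8_general
    (n : ℕ) (hn : 1 ≤ n)
    (Ω : Set (EuclideanSpace ℝ (Fin n))) (hΩb : Bornology.IsBounded Ω)
    (x₀ : EuclideanSpace ℝ (Fin n)) (hx₀ : x₀ ∈ Ω)
    (p pc : ℝ) (hp : 1 < p) (hpc : pc = p / (p - 1))
    (ℓ : ℝ) (hℓ : ℓ = Metric.diam Ω)
    (ω : ℝ → ℝ) (hωmeas : Measurable ω) (hωpos : ∀ r > (0 : ℝ), 0 < ω r)
    (γ : ℝ)
    (hint : (∫⁻ r in Ioo (0 : ℝ) ℓ, ENNReal.ofReal (ω r * r ^ (γ - 1))) < ⊤) :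
    ∃ C > 0, ∀ f : EuclideanSpace ℝ (Fin n) → ℝ, Measurable f →
      (∫⁻ y in Ω, ENNReal.ofReal (‖y - x₀‖ ^ γ) * ENNReal.ofReal |f y|) ≤
        ENNReal.ofReal C * cMnorm p pc ω Ω x₀ f := by
  have : NeZero n := ⟨by omega⟩
  have hpc' : pc.HolderConjugate p := hpc ▸ (Real.HolderConjugate.conjExponent hp).symm
  set M := ENNReal.ofReal (max (2 ^ γ) 2) *
    (ENNReal.ofReal (2 ^ ((n : ℝ) / pc)) *
      volume (ball (0 : EuclideanSpace ℝ (Fin n)) 1) ^ (1 / pc) *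
      ∫⁻ r in Ioo 0 (diam Ω), ENNReal.ofReal (ω r * r ^ (γ - 1)))
  have hball : volume (ball (0 : EuclideanSpace ℝ (Fin n)) 1) ^ (1 / pc) ≠ ⊤ :=
    rpow_ne_top_of_nonneg (one_div_nonneg.mpr hpc'.nonneg) measure_ball_lt_top.ne
  have hM : M ≠ ⊤ :=
    mul_ne_top ofReal_ne_top (mul_ne_top (mul_ne_top ofReal_ne_top hball) (hℓ ▸ hint.ne))
  refine ⟨M.toReal + 1, by positivity, fun f hf => ?_⟩
  calc _ ≤ M * cMnorm p pc ω Ω x₀ f :=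
        lintegral_rpow_norm_sub_mul_le_cMnorm hΩb hx₀ hpc' hωmeas hωpos γ hf
    _ ≤ ENNReal.ofReal (M.toReal + 1) * cMnorm p pc ω Ω x₀ f := by
        gcongr
        rw [← ofReal_toReal hM]
        exact ofReal_le_ofReal (by simp)

/-- Remark 4.4: if `∫_0^ℓ ω(r) r^{γ−1} dr < ∞` then `∁M^{p,ω}_{x₀}(Ω)`
embeds into the weighted space `L^1(Ω, |y−x₀|^γ)`. -/
theorem statement8
    (n : ℕ) (hn : 1 ≤ n)
    (Ω : Set (EuclideanSpace ℝ (Fin n))) (hΩo : IsOpen Ω) (hΩb : Bornology.IsBounded Ω)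
    (x₀ : EuclideanSpace ℝ (Fin n)) (hx₀ : x₀ ∈ Ω)
    (p pc : ℝ) (hp : 1 < p) (hpc : pc = p / (p - 1))
    (ℓ : ℝ) (hℓ : ℓ = Metric.diam Ω)
    (ω : ℝ → ℝ) (hωmeas : Measurable ω) (hωpos : ∀ r > (0 : ℝ), 0 < ω r)
    (γ : ℝ)
    (hint : (∫⁻ r in Ioo (0 : ℝ) ℓ, ENNReal.ofReal (ω r * r ^ (γ - 1))) < ⊤) :
    ∃ C > 0, ∀ f : EuclideanSpace ℝ (Fin n) → ℝ, Measurable f →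
      (∫⁻ y in Ω, ENNReal.ofReal (‖y - x₀‖ ^ γ) * ENNReal.ofReal |f y|) ≤
        ENNReal.ofReal C * cMnorm p pc ω Ω x₀ f :=
  statement8_general n hn Ω hΩb x₀ hx₀ p pc hp hpc ℓ hℓ ω hωmeas hωpos γ hint
end

section
/- Let n ≥ 1, let Ω ⊂ ℝⁿ be a bounded open set with diameter ℓ, let x₀ ∈ Ω, and let 1 < p < ∞ with conjugate exponent p′ = p/(p−1). Suppose the measurable function f satisfies ‖f‖_{L^p(Ω \ B(x₀,s))} < ∞ for every s ∈ (0,ℓ). Fix t ∈ (0,ℓ) and let f₂ = f·χ_{B(x₀,t)∩Ω}. Then there exists a constant C > 0, not depending on f, t, x₀ and z, such that for every z ∈ Ω with |z−x₀| ≥ 2t, Mf₂(z) ≤ C |x₀−z|^{−n} ∫_0^t s^{n/p′ − 1} ‖f‖_{L^p(Ω \ B(x₀,s))} ds, where Mg(z) = sup_{r>0} |B(z,r)|^{−1} ∫_{B(z,r)∩Ω} |g(y)| dy is the Hardy–Littlewood maximal operator relative to Ω. -/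
open MeasureTheory Metric Set ENNReal Filter Topology

/-- The Hardy–Littlewood maximal operator relative to `Ω`:
`Mg(z) = sup_{r>0} |B(z,r)|⁻¹ ∫_{B(z,r)∩Ω} |g(y)| dy`, valued in `ℝ≥0∞`. -/
noncomputable def maxOp {n : ℕ} (Ω : Set (EuclideanSpace ℝ (Fin n)))
    (g : EuclideanSpace ℝ (Fin n) → ℝ) (z : EuclideanSpace ℝ (Fin n)) : ℝ≥0∞ :=
  ⨆ r ∈ Ioi (0 : ℝ),
    (volume (ball z r))⁻¹ * ∫⁻ y in ball z r ∩ Ω, ENNReal.ofReal |g y|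

/-!
Because `|z - x₀| ≥ 2t`, only balls `B(z, r)` with `r > |z - x₀| / 2` meet `B(x₀, t)`, so
`Mf₂(z) ≲ |x₀ - z|^{-n} ∫_{B(x₀,t) ∩ Ω} |f|`. Cut `B(x₀, t) \ {x₀}` into the dyadic shells
`2ρ < |y - x₀| ≤ 4ρ`, `ρ = t / 2^{k+2}`. On a shell, Hölder gives
`∫ |f| ≤ ‖f‖_{L^p(Ω \ B(x₀, 2ρ))} |B(0, 4ρ)|^{1/p′} ≲ ρ^{n/p′} ‖f‖_{L^p(Ω \ B(x₀, 2ρ))}`,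
and since `s ↦ ‖f‖_{L^p(Ω \ B(x₀, s))}` decreases, this is
`≲ ∫_ρ^{2ρ} s^{n/p′ - 1} ‖f‖_{L^p(Ω \ B(x₀, s))} ds`. The intervals `(ρ, 2ρ]` are disjoint
subsets of `(0, t)`, so summing over the shells gives the estimate.
-/

lemma half_rpow_le_rpow {β a s : ℝ} (hβ : -1 ≤ β) (ha : 0 < a) (has : a ≤ s) (hs : s ≤ 2 * a) :
    a ^ β / 2 ≤ s ^ β := by
  rcases le_or_gt 0 β with hβ0 | hβ0
  · linarith [Real.rpow_le_rpow ha.le has hβ0, Real.rpow_pos_of_pos ha β]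
  · calc a ^ β / 2 = 2 ^ (-1 : ℝ) * a ^ β := by rw [Real.rpow_neg_one]; ring
      _ ≤ 2 ^ β * a ^ β := by gcongr; exact one_le_two
      _ = (2 * a) ^ β := (Real.mul_rpow zero_le_two ha.le).symm
      _ ≤ s ^ β := Real.rpow_le_rpow_of_nonpos (ha.trans_le has) hs hβ0.le

lemma ENNReal.lintegral_le_Lp_mul_measure_univ_rpow {α : Type*} [MeasurableSpace α]
    (μ : Measure α) {p q : ℝ} (hpq : p.HolderConjugate q) {F : α → ℝ≥0∞} (hF : AEMeasurable F μ) :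
    ∫⁻ a, F a ∂μ ≤ (∫⁻ a, F a ^ p ∂μ) ^ (1 / p) * μ univ ^ (1 / q) := by
  simpa using ENNReal.lintegral_mul_le_Lp_mul_Lq μ hpq hF aemeasurable_const (g := 1)

lemma le_setLIntegral_Ioc_rpow_mul {β a : ℝ} (hβ : -1 ≤ β) (ha : 0 < a) {φ : ℝ → ℝ≥0∞}
    (hφ : Antitone φ) :
    ENNReal.ofReal (a ^ (β + 1) / 2) * φ (2 * a) ≤
      ∫⁻ s in Ioc a (2 * a), ENNReal.ofReal (s ^ β) * φ s := by
  calc ENNReal.ofReal (a ^ (β + 1) / 2) * φ (2 * a)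
      = ∫⁻ _ in Ioc a (2 * a), ENNReal.ofReal (a ^ β / 2) * φ (2 * a) := by
        rw [setLIntegral_const, Real.volume_Ioc, mul_right_comm, ← ENNReal.ofReal_mul
          (by positivity), Real.rpow_add_one ha.ne']
        ring_nf
    _ ≤ ∫⁻ s in Ioc a (2 * a), ENNReal.ofReal (s ^ β) * φ s :=
        setLIntegral_mono' measurableSet_Ioc fun s hs =>
          mul_le_mul' (ENNReal.ofReal_le_ofReal (half_rpow_le_rpow hβ ha hs.1.le hs.2)) (hφ hs.2)

lemma Metric.ball_diff_singleton_subset_iUnion_dyadic {X : Type*} [MetricSpace X] (x₀ : X)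
    (t : ℝ) :
    ball x₀ t \ {x₀} ⊆ ⋃ k : ℕ, closedBall x₀ (t / 2 ^ k) \ closedBall x₀ (t / 2 ^ (k + 1)) := by
  rintro y ⟨hyt, hyx⟩
  have hd : 0 < dist y x₀ := dist_pos.2 hyx
  obtain ⟨k, hk, hk'⟩ := exists_nat_pow_near (one_le_div hd |>.2 (mem_ball.1 hyt).le) one_lt_two
  refine mem_iUnion.2 ⟨k, ?_, ?_⟩
  · rw [mem_closedBall, le_div_iff₀ (by positivity)]
    rw [le_div_iff₀ hd] at hk
    linarith
  · rw [mem_closedBall, not_le, div_lt_iff₀ (by positivity)]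
    rwa [div_lt_iff₀ hd, mul_comm] at hk'

section Euclidean

variable {n : ℕ}

local notation "E" => EuclideanSpace ℝ (Fin n)

lemma lpnorm_mono {p : ℝ} (hp : 0 < p) {A B : Set E} (h : A ⊆ B) (f : E → ℝ) :
    lpnorm p A f ≤ lpnorm p B f :=
  ENNReal.rpow_le_rpow (lintegral_mono_set h) (by positivity)

lemma antitone_lpnorm_diff_ball {p : ℝ} (hp : 0 < p) (Ω : Set E) (x₀ : E) (f : E → ℝ) :
    Antitone fun s => lpnorm p (Ω \ ball x₀ s) f :=
  fun _ _ hst => lpnorm_mono hp (sdiff_subset_sdiff_right (ball_subset_ball hst)) f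

lemma setLIntegral_le_lpnorm_mul_volume_rpow {p q : ℝ} (hpq : p.HolderConjugate q)
    {f : E → ℝ} (hf : Measurable f) {A B : Set E} (hAB : A ⊆ B) :
    ∫⁻ y in A, ENNReal.ofReal |f y| ≤ lpnorm p B f * volume A ^ (1 / q) := by
  have hHolder := ENNReal.lintegral_le_Lp_mul_measure_univ_rpow (volume.restrict A) hpq
    (ENNReal.measurable_ofReal.comp hf.abs).aemeasurable
  rw [Measure.restrict_apply_univ] at hHolder
  exact hHolder.trans (by gcongr; exact lpnorm_mono hpq.pos hAB f)

lemma setLIntegral_shell_le {Ω : Set E} {p q : ℝ} (hpq : p.HolderConjugate q) {f : E → ℝ}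
    (hf : Measurable f) (x₀ : E) {ρ : ℝ} (hρ : 0 < ρ) :
    ∫⁻ y in (closedBall x₀ (4 * ρ) \ closedBall x₀ (2 * ρ)) ∩ Ω, ENNReal.ofReal |f y| ≤
      2 * volume (closedBall (0 : E) 4) ^ (1 / q) *
        ∫⁻ s in Ioc ρ (2 * ρ),
          ENNReal.ofReal (s ^ ((n : ℝ) / q - 1)) * lpnorm p (Ω \ ball x₀ s) f := by
  set w := volume (closedBall (0 : E) 4)
  have hq : 0 < q := hpq.symm.pos
  have hshell : (closedBall x₀ (4 * ρ) \ closedBall x₀ (2 * ρ)) ∩ Ω ⊆ Ω \ ball x₀ (2 * ρ) :=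
    fun y ⟨⟨_, hy⟩, hyΩ⟩ => ⟨hyΩ, fun hb => hy (ball_subset_closedBall hb)⟩
  have hvol : volume ((closedBall x₀ (4 * ρ) \ closedBall x₀ (2 * ρ)) ∩ Ω) ^ (1 / q) ≤
      ENNReal.ofReal (ρ ^ ((n : ℝ) / q)) * w ^ (1 / q) := by
    calc volume ((closedBall x₀ (4 * ρ) \ closedBall x₀ (2 * ρ)) ∩ Ω) ^ (1 / q)
        ≤ volume (closedBall x₀ (ρ * 4)) ^ (1 / q) := by
          rw [mul_comm ρ]
          exact ENNReal.rpow_le_rpow (measure_mono (inter_subset_left.trans sdiff_subset))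
            (by positivity)
      _ = ENNReal.ofReal (ρ ^ ((n : ℝ) / q)) * w ^ (1 / q) := by
          rw [Measure.addHaar_closedBall_mul volume x₀ hρ.le zero_le_four,
            finrank_euclideanSpace_fin, ENNReal.mul_rpow_of_nonneg _ _ (by positivity),
            ENNReal.ofReal_rpow_of_pos (by positivity), ← Real.rpow_natCast,
            ← Real.rpow_mul hρ.le, mul_one_div]
  have hlower := le_setLIntegral_Ioc_rpow_mul (β := (n : ℝ) / q - 1)
    (by linarith [div_nonneg n.cast_nonneg hq.le]) hρ
    (antitone_lpnorm_diff_ball hpq.pos Ω x₀ f)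
  rw [sub_add_cancel] at hlower
  calc ∫⁻ y in (closedBall x₀ (4 * ρ) \ closedBall x₀ (2 * ρ)) ∩ Ω, ENNReal.ofReal |f y|
      ≤ lpnorm p (Ω \ ball x₀ (2 * ρ)) f * (ENNReal.ofReal (ρ ^ ((n : ℝ) / q)) * w ^ (1 / q)) :=
        (setLIntegral_le_lpnorm_mul_volume_rpow hpq hf hshell).trans (by gcongr)
    _ = 2 * w ^ (1 / q) *
          (ENNReal.ofReal (ρ ^ ((n : ℝ) / q) / 2) * lpnorm p (Ω \ ball x₀ (2 * ρ)) f) := by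
        have htwo : ENNReal.ofReal (ρ ^ ((n : ℝ) / q)) =
            2 * ENNReal.ofReal (ρ ^ ((n : ℝ) / q) / 2) := by
          rw [← ENNReal.ofReal_ofNat 2, ← ENNReal.ofReal_mul zero_le_two]
          ring_nf
        rw [htwo]
        ring
    _ ≤ _ := by gcongr

theorem setLIntegral_ball_inter_le [NeZero n] {Ω : Set E} {p q : ℝ} (hpq : p.HolderConjugate q)
    {f : E → ℝ} (hf : Measurable f) (x₀ : E) {t : ℝ} (ht : 0 < t) :
    ∫⁻ y in ball x₀ t ∩ Ω, ENNReal.ofReal |f y| ≤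
      2 * volume (closedBall (0 : E) 4) ^ (1 / q) *
        ∫⁻ s in Ioo 0 t, ENNReal.ofReal (s ^ ((n : ℝ) / q - 1)) * lpnorm p (Ω \ ball x₀ s) f := by
  set κ := 2 * volume (closedBall (0 : E) 4) ^ (1 / q)
  set g : ℝ → ℝ≥0∞ := fun s => ENNReal.ofReal (s ^ ((n : ℝ) / q - 1)) * lpnorm p (Ω \ ball x₀ s) f
  set r : ℕ → ℝ := fun k => t / 2 ^ k
  have hr_pos : ∀ k, 0 < r k := fun k => by positivity
  have hr_succ : ∀ k, r k = 2 * r (k + 1) := fun k => by simp only [r, pow_succ]; field_simp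
  have hr_anti : Antitone r := fun i j hij =>
    div_le_div_of_nonneg_left ht.le (by positivity) (pow_le_pow_right₀ one_le_two hij)
  have hcover : (ball x₀ t ∩ Ω : Set E) ≤ᵐ[volume]
      (⋃ k, (closedBall x₀ (r k) \ closedBall x₀ (r (k + 1))) ∩ Ω : Set _) := by
    -- `{x₀}` is null only because `n ≠ 0`; for `n = 0` the lemma fails.
    refine ae_le_set.2 (measure_mono_null ?_ (measure_singleton x₀))
    rintro y ⟨⟨hyt, hyΩ⟩, hy⟩
    by_contra hyx
    obtain ⟨k, hk⟩ := mem_iUnion.1 (ball_diff_singleton_subset_iUnion_dyadic x₀ t ⟨hyt, hyx⟩)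
    exact hy (mem_iUnion.2 ⟨k, hk, hyΩ⟩)
  have hshell : ∀ k, ∫⁻ y in (closedBall x₀ (r k) \ closedBall x₀ (r (k + 1))) ∩ Ω,
      ENNReal.ofReal |f y| ≤ κ * ∫⁻ s in Ioc (r (k + 2)) (r (k + 1)), g s := fun k => by
    rw [show r k = 4 * r (k + 2) by rw [hr_succ k, hr_succ (k + 1)]; ring, hr_succ (k + 1)]
    exact setLIntegral_shell_le hpq hf x₀ (hr_pos (k + 2))
  have hdisj : Pairwise (Function.onFun Disjoint fun k => Ioc (r (k + 2)) (r (k + 1))) :=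
    (hr_anti.comp_monotone fun _ _ h => Nat.succ_le_succ h).pairwise_disjoint_on_Ioc_succ
  have hJ : ⋃ k, Ioc (r (k + 2)) (r (k + 1)) ⊆ Ioo 0 t := iUnion_subset fun k s hs =>
    ⟨(hr_pos _).trans hs.1,
      hs.2.trans_lt (div_lt_self ht (one_lt_pow₀ (one_lt_two : (1 : ℝ) < 2) k.succ_ne_zero))⟩
  calc ∫⁻ y in ball x₀ t ∩ Ω, ENNReal.ofReal |f y|
      ≤ ∫⁻ y in ⋃ k, (closedBall x₀ (r k) \ closedBall x₀ (r (k + 1))) ∩ Ω, ENNReal.ofReal |f y| :=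
        lintegral_mono_set' hcover
    _ ≤ ∑' k, ∫⁻ y in (closedBall x₀ (r k) \ closedBall x₀ (r (k + 1))) ∩ Ω,
          ENNReal.ofReal |f y| := lintegral_iUnion_le _ _
    _ ≤ ∑' k, κ * ∫⁻ s in Ioc (r (k + 2)) (r (k + 1)), g s := ENNReal.tsum_le_tsum hshell
    _ = κ * ∫⁻ s in ⋃ k, Ioc (r (k + 2)) (r (k + 1)), g s := by
        rw [ENNReal.tsum_mul_left, lintegral_iUnion (fun _ => measurableSet_Ioc) hdisj]
    _ ≤ κ * ∫⁻ s in Ioo 0 t, g s := by gcongr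

lemma maxOp_indicator_le {Ω S : Set E} (hS : MeasurableSet S) {x₀ : E} {t : ℝ}
    (hSt : S ⊆ ball x₀ t) (f : E → ℝ) {z : E} (hz : 2 * t ≤ dist z x₀) :
    maxOp Ω (S.indicator f) z ≤
      (volume (ball z (dist z x₀ / 2)))⁻¹ * ∫⁻ y in S, ENNReal.ofReal |f y| := by
  refine iSup₂_le fun r _ => ?_
  have hind : (fun y => ENNReal.ofReal |S.indicator f y|) =
      S.indicator fun y => ENNReal.ofReal |f y| := by
    ext y
    by_cases hy : y ∈ S <;> simp [hy]
  rw [hind, setLIntegral_indicator hS]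
  rcases le_or_gt r (dist z x₀ / 2) with hr | hr
  · have hdisj : Disjoint (ball x₀ t) (ball z r) :=
      ball_disjoint_ball (by rw [dist_comm]; linarith)
    have hempty : S ∩ (ball z r ∩ Ω) = ∅ :=
      ((hdisj.mono_left hSt).mono_right inter_subset_left).inter_eq
    simp [hempty]
  · exact mul_le_mul' (ENNReal.inv_le_inv.2 (measure_mono (ball_subset_ball hr.le)))
      (lintegral_mono_set inter_subset_left)

lemma inv_volume_ball_half {z : E} {D : ℝ} (hD : 0 < D) :
    (volume (ball z (D / 2)))⁻¹ =
      ENNReal.ofReal (D ^ (-(n : ℝ))) * (volume (ball (0 : E) (1 / 2)))⁻¹ := by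
  rw [div_eq_mul_one_div D 2, Measure.addHaar_ball_mul_of_pos volume z hD,
    finrank_euclideanSpace_fin, ENNReal.mul_inv (Or.inr measure_ball_lt_top.ne)
    (Or.inl ofReal_ne_top), ← ENNReal.ofReal_inv_of_pos (by positivity), Real.rpow_neg hD.le,
    Real.rpow_natCast]

end Euclidean

theorem statement11_general
    (n : ℕ) (hn : 1 ≤ n)
    (Ω : Set (EuclideanSpace ℝ (Fin n))) (hΩo : IsOpen Ω)
    (p pc : ℝ) (hp : 1 < p) (hpc : pc = p / (p - 1))
    (ℓ : ℝ) :
    ∃ C > 0, ∀ x₀ ∈ Ω, ∀ f : EuclideanSpace ℝ (Fin n) → ℝ, Measurable f →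
      (∀ s ∈ Ioo (0 : ℝ) ℓ, lpnorm p (Ω \ ball x₀ s) f < ⊤) →
      ∀ t ∈ Ioo (0 : ℝ) ℓ, ∀ z ∈ Ω, 2 * t ≤ ‖z - x₀‖ →
        maxOp Ω ((ball x₀ t ∩ Ω).indicator f) z ≤
          ENNReal.ofReal C * ENNReal.ofReal (‖x₀ - z‖ ^ (-(n : ℝ))) *
            ∫⁻ s in Ioo (0 : ℝ) t,
              ENNReal.ofReal (s ^ ((n : ℝ) / pc - 1)) * lpnorm p (Ω \ ball x₀ s) f := by
  have : NeZero n := ⟨by omega⟩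
  have hpq : p.HolderConjugate pc := (Real.holderConjugate_iff_eq_conjExponent hp).2 hpc
  set κ : ℝ≥0∞ := (volume (ball (0 : EuclideanSpace ℝ (Fin n)) (1 / 2)))⁻¹ *
    (2 * volume (closedBall (0 : EuclideanSpace ℝ (Fin n)) 4) ^ (1 / pc))
  have hκ0 : κ ≠ 0 := mul_ne_zero (ENNReal.inv_ne_zero.2 measure_ball_lt_top.ne)
    (mul_ne_zero two_ne_zero (ENNReal.rpow_pos (measure_closedBall_pos _ _ four_pos)
      measure_closedBall_lt_top.ne).ne')
  have hκtop : κ ≠ ⊤ :=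
    ENNReal.mul_ne_top (ENNReal.inv_ne_top.2 (measure_ball_pos _ _ one_half_pos).ne')
      (ENNReal.mul_ne_top ofNat_ne_top (ENNReal.rpow_ne_top_of_nonneg
        (one_div_nonneg.2 hpq.symm.nonneg) measure_closedBall_lt_top.ne))
  refine ⟨κ.toReal, ENNReal.toReal_pos hκ0 hκtop, fun x₀ _ f hf _ t ht z _ hzt => ?_⟩
  have hD : 2 * t ≤ dist z x₀ := by rwa [dist_eq_norm]
  calc maxOp Ω ((ball x₀ t ∩ Ω).indicator f) z
      ≤ (volume (ball z (dist z x₀ / 2)))⁻¹ * ∫⁻ y in ball x₀ t ∩ Ω, ENNReal.ofReal |f y| :=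
        maxOp_indicator_le (measurableSet_ball.inter hΩo.measurableSet) inter_subset_left f hD
    _ ≤ (volume (ball z (dist z x₀ / 2)))⁻¹ *
          (2 * volume (closedBall (0 : EuclideanSpace ℝ (Fin n)) 4) ^ (1 / pc) *
            ∫⁻ s in Ioo 0 t,
              ENNReal.ofReal (s ^ ((n : ℝ) / pc - 1)) * lpnorm p (Ω \ ball x₀ s) f) := by
        gcongr
        exact setLIntegral_ball_inter_le hpq hf x₀ ht.1
    _ = _ := by
        rw [inv_volume_ball_half (by linarith [ht.1]), ENNReal.ofReal_toReal hκtop, dist_comm,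
          dist_eq_norm]
        ring

/-- estimate (5.4): with `f₂ = f·χ_{B(x₀,t)∩Ω}`, for `z ∈ Ω` with
`|z − x₀| ≥ 2t` one has
`Mf₂(z) ≤ C |x₀−z|^{−n} ∫_0^t s^{n/p′−1}‖f‖_{L^p(Ω∖B(x₀,s))} ds`, with `C` not
depending on `f, t, x₀, z`. -/
theorem statement11
    (n : ℕ) (hn : 1 ≤ n)
    (Ω : Set (EuclideanSpace ℝ (Fin n))) (hΩo : IsOpen Ω) (hΩb : Bornology.IsBounded Ω)
    (p pc : ℝ) (hp : 1 < p) (hpc : pc = p / (p - 1))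
    (ℓ : ℝ) (hℓ : ℓ = Metric.diam Ω) :
    ∃ C > 0, ∀ x₀ ∈ Ω, ∀ f : EuclideanSpace ℝ (Fin n) → ℝ, Measurable f →
      (∀ s ∈ Ioo (0 : ℝ) ℓ, lpnorm p (Ω \ ball x₀ s) f < ⊤) →
      ∀ t ∈ Ioo (0 : ℝ) ℓ, ∀ z ∈ Ω, 2 * t ≤ ‖z - x₀‖ →
        maxOp Ω ((ball x₀ t ∩ Ω).indicator f) z ≤
          ENNReal.ofReal C * ENNReal.ofReal (‖x₀ - z‖ ^ (-(n : ℝ))) *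
            ∫⁻ s in Ioo (0 : ℝ) t,
              ENNReal.ofReal (s ^ ((n : ℝ) / pc - 1)) * lpnorm p (Ω \ ball x₀ s) f :=
  statement11_general n hn Ω hΩo p pc hp hpc ℓ
end
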